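/- Let w = (w_1,…,w_{2n_0}) ∈ 𝕋^{2n_0} be an equilibrium of the reduced Kuramoto system and set C_w = Σ_{i=1}^{2n_0} cos w_i. If C_w ≠ −1, then sin w_i + sin w_{2n_0−i+1} = 0 for every i ∈ {1,…,n_0}. -/

import Mathlib

open Real Set Filter

/-- coefficient of the natural frequency of the `i`-th oscillator (0-indexed) in the reduced system:
`i - n0` for `i < n0` (paper's `i - n0 - 1`, 1-indexed) and `i - n0 + 1` otherwise. -/
noncomputable def redCoeff (n0 : ℕ) (i : Fin (2 * n0)) : ℝ :=
  if (i : ℕ) < n0 then (i : ℕ) - (n0 : ℝ) else (i : ℕ) - (n0 : ℝ) + 1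

/-- right-hand side of the reduced Kuramoto system on `𝕋^{2 n0}` (with `n = 2 n0 + 1`, `ν = a/n`). -/
noncomputable def redField (n0 : ℕ) (a K : ℝ) (v : Fin (2 * n0) → ℝ) (i : Fin (2 * n0)) : ℝ :=
  redCoeff n0 i * (a / (2 * (n0 : ℝ) + 1)) -
    (K / (2 * (n0 : ℝ) + 1)) *
      (2 * Real.sin (v i) +
        ∑ j ∈ Finset.univ.erase i, (Real.sin (v j) - Real.sin (v j - v i)))

/-- the function `χ^σ`. -/
noncomputable def chi (n0 : ℕ) (σ : Fin (2 * n0) → ℝ) (ξ : ℝ) : ℝ :=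
  (ξ / n0) * (1 + ∑ i, σ i * Real.sqrt (1 - (redCoeff n0 i * ξ / n0) ^ 2))

/-- the function `h^σ`. -/
noncomputable def hSigma (n0 : ℕ) (σ : Fin (2 * n0) → ℝ) (ξ : ℝ) : ℝ :=
  (1 / n0) * ∑ i, σ i * (redCoeff n0 i / n0) ^ 2 /
    Real.sqrt (1 - (redCoeff n0 i * ξ / n0) ^ 2)

/-- the consistency equation for `Ĉ^σ`. -/
def ConsistentC (n0 : ℕ) (a K : ℝ) (σ : Fin (2 * n0) → ℝ) (C : ℝ) : Prop :=
  C ≠ 0 ∧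
  (∀ i, |redCoeff n0 i * a / ((2 * (n0 : ℝ) + 1) * K * C)| ≤ 1) ∧
  C = (1 / (2 * (n0 : ℝ) + 1)) *
    (1 + ∑ i, σ i * Real.sqrt (1 - (redCoeff n0 i * a / ((2 * (n0 : ℝ) + 1) * K * C)) ^ 2))

/-- the angles `φ_i = arcsin((i−n0−1)a/(nKĈ))` resp. `arcsin((i−n0)a/(nKĈ))`. -/
noncomputable def phiC (n0 : ℕ) (a K C : ℝ) (i : Fin (2 * n0)) : ℝ :=
  Real.arcsin (redCoeff n0 i * a / ((2 * (n0 : ℝ) + 1) * K * C))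

/-- the angles `φ_i = ± ξ`-parametrized version. -/
noncomputable def phiXi (n0 : ℕ) (s ξ : ℝ) (i : Fin (2 * n0)) : ℝ :=
  s * Real.arcsin (redCoeff n0 i * ξ / n0)

/-- the point `v^σ` built from signs `σ` and angles `φ`. -/
noncomputable def vSigma (n0 : ℕ) (σ : Fin (2 * n0) → ℝ) (φ : Fin (2 * n0) → ℝ)
    (i : Fin (2 * n0)) : ℝ :=
  if σ i = 1 then φ i else if 0 < φ i then π - φ i else -φ i - π

/-- `v` is a solution of the reduced Kuramoto system. -/
def IsRedSol (n0 : ℕ) (a K : ℝ) (v : ℝ → Fin (2 * n0) → ℝ) : Prop :=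
  ∀ t : ℝ, ∀ i, HasDerivAt (fun s => v s i) (redField n0 a K (v t) i) t

/-- Lyapunov stability of an equilibrium of the reduced Kuramoto system. -/
def RedStable (n0 : ℕ) (a K : ℝ) (vstar : Fin (2 * n0) → ℝ) : Prop :=
  ∀ ε > 0, ∃ δ > 0, ∀ v : ℝ → Fin (2 * n0) → ℝ, IsRedSol n0 a K v →
    dist (v 0) vstar < δ → ∀ t ≥ 0, dist (v t) vstar < ε

/-- asymptotic stability of an equilibrium of the reduced Kuramoto system. -/
def RedAsympStable (n0 : ℕ) (a K : ℝ) (vstar : Fin (2 * n0) → ℝ) : Prop :=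
  RedStable n0 a K vstar ∧
  ∃ δ > 0, ∀ v : ℝ → Fin (2 * n0) → ℝ, IsRedSol n0 a K v →
    dist (v 0) vstar < δ → Tendsto (fun t => v t) atTop (nhds vstar)

lemma redCoeff_pair (n0 : ℕ) (hn0 : 1 < n0) (k : Fin (2 * n0)) :
    redCoeff n0 k + redCoeff n0 ⟨2 * n0 - 1 - (k : ℕ), Nat.lt_of_le_of_lt (Nat.sub_le _ _) (by omega)⟩ = 0 := by
  have hk := k.isLt
  have hcast : ((2 * n0 - 1 - (k : ℕ) : ℕ) : ℝ) = 2 * (n0 : ℝ) - 1 - (k : ℕ) := by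
    have h2 : (2 * n0 - 1 - (k : ℕ)) + (k : ℕ) + 1 = 2 * n0 := by omega
    have h3 := congrArg (fun m : ℕ => (m : ℝ)) h2
    push_cast at h3
    linarith
  unfold redCoeff
  show (if (k : ℕ) < n0 then ((k : ℕ) : ℝ) - n0 else ((k : ℕ) : ℝ) - n0 + 1) +
    (if 2 * n0 - 1 - (k : ℕ) < n0 then ((2 * n0 - 1 - (k : ℕ) : ℕ) : ℝ) - n0
      else ((2 * n0 - 1 - (k : ℕ) : ℕ) : ℝ) - n0 + 1) = 0
  rcases lt_or_ge (k : ℕ) n0 with h | h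
  · rw [if_pos h, if_neg (by omega), hcast]; ring
  · rw [if_neg (by omega), if_pos (by omega), hcast]; ring

/-- If `w` is an equilibrium of the reduced Kuramoto system with
`C_w = Σ cos w_i ≠ −1`, then `sin w_i + sin w_{2n_0−i+1} = 0` for every `i ∈ {1,…,n_0}`
(0-indexed: partner of `i` is `2n_0 − 1 − i`). -/
theorem stmt6 (n0 : ℕ) (hn0 : 1 < n0) (a K : ℝ) (ha : 0 < a) (hK : 0 < K)
    (w : Fin (2 * n0) → ℝ) (hw : ∀ i, redField n0 a K w i = 0)
    (hC : ∑ i, Real.cos (w i) ≠ -1) :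
    ∀ i : Fin (2 * n0), (i : ℕ) < n0 →
      Real.sin (w i) + Real.sin (w ⟨2 * n0 - 1 - (i : ℕ), by omega⟩) = 0 := by
  -- equilibrium equations multiplied through by `n = 2 n0 + 1`
  have E : ∀ k : Fin (2 * n0), redCoeff n0 k * a =
      K * (Real.sin (w k) * (1 + ∑ j, Real.cos (w j)) +
        (∑ j, Real.sin (w j)) * (1 - Real.cos (w k))) := by
    intro k
    have h0 := hw k
    unfold redField at h0
    have hkey : 2 * Real.sin (w k) +
        ∑ j ∈ Finset.univ.erase k, (Real.sin (w j) - Real.sin (w j - w k)) =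
        Real.sin (w k) * (1 + ∑ j, Real.cos (w j)) +
          (∑ j, Real.sin (w j)) * (1 - Real.cos (w k)) := by
      have h1 : ∀ j : Fin (2 * n0), Real.sin (w j) - Real.sin (w j - w k) =
          Real.sin (w j) * (1 - Real.cos (w k)) + Real.cos (w j) * Real.sin (w k) := by
        intro j; rw [Real.sin_sub]; ring
      simp_rw [h1]
      rw [Finset.sum_add_distrib, ← Finset.sum_mul, ← Finset.sum_mul,
        Finset.sum_erase_eq_sub (Finset.mem_univ k),
        Finset.sum_erase_eq_sub (Finset.mem_univ k)]
      ring
    rw [hkey] at h0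
    have hn : (2 * (n0 : ℝ) + 1) ≠ 0 := by positivity
    field_simp at h0
    linarith
  -- the coefficients sum to zero
  have hcoeff0 : ∑ k : Fin (2 * n0), redCoeff n0 k = 0 := by
    exact Finset.sum_involution
      (fun k _ => (⟨2 * n0 - 1 - (k : ℕ), by omega⟩ : Fin (2 * n0)))
      (fun k _ => redCoeff_pair n0 hn0 k)
      (fun k _ _ => Fin.ne_of_val_ne (by have := k.isLt; simp only [Fin.val_mk]; omega))
      (fun k _ => Finset.mem_univ _)
      (fun k _ => Fin.ext (by have := k.isLt; simp only [Fin.val_mk]; omega))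
  -- summing the equilibrium equations gives `S = 0`
  have hS : (∑ j, Real.sin (w j)) = 0 := by
    have hsum := Finset.sum_congr rfl (fun k (_ : k ∈ Finset.univ) => E k)
    rw [← Finset.sum_mul, hcoeff0, zero_mul, ← Finset.mul_sum] at hsum
    have hexp : ∑ k, (Real.sin (w k) * (1 + ∑ j, Real.cos (w j)) +
        (∑ j, Real.sin (w j)) * (1 - Real.cos (w k))) =
        (∑ j, Real.sin (w j)) * (2 * (n0 : ℝ) + 1) := by
      simp_rw [mul_sub, mul_one]
      rw [Finset.sum_add_distrib, Finset.sum_sub_distrib, ← Finset.sum_mul,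
        ← Finset.mul_sum, Finset.sum_const, Finset.card_univ, Fintype.card_fin,
        nsmul_eq_mul]
      push_cast
      ring
    rw [hexp] at hsum
    have hK' : K ≠ 0 := ne_of_gt hK
    have hn : (2 * (n0 : ℝ) + 1) ≠ 0 := by positivity
    rcases mul_eq_zero.mp hsum.symm with h | h
    · exact absurd h hK'
    · rcases mul_eq_zero.mp h with h' | h'
      · exact h'
      · exact absurd h' hn
  -- conclude for each pair
  intro i hi
  set j : Fin (2 * n0) := ⟨2 * n0 - 1 - (i : ℕ), by omega⟩ with hj
  have Ei := E i
  have Ej := E j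
  rw [hS] at Ei Ej
  have hpair := redCoeff_pair n0 hn0 i
  have h1C : (1 : ℝ) + ∑ k, Real.cos (w k) ≠ 0 := by
    intro h; exact hC (by linarith)
  have hmain : K * ((1 + ∑ k, Real.cos (w k)) * (Real.sin (w i) + Real.sin (w j))) = 0 := by
    linear_combination a * hpair - Ei - Ej
  rcases mul_eq_zero.mp hmain with h | h
  · exact absurd h (ne_of_gt hK)
  · rcases mul_eq_zero.mp h with h' | h'
    · exact absurd h' h1C
    · exact h'
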